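/- arXiv:2108.12464 — 3 statements merged into one kernel-verified Lean document; each statement's English description precedes it below -/
import Mathlib

section
/- Suppose 3n points lying on the lines y=0, y=1, y=2 (with n points on each line, having x-coordinate multisets A, B, C respectively with ΣA + ΣB = 2·ΣC) are partitioned into n y-monotone angles, each being either straight or left-facing. Then every angle in the partition is a straight angle. -/
/-! Summed over all angles, the inequalities `c (σ i) ≤ (a i + b (τ i)) / 2` become the equality
`∑ c = (∑ a + ∑ b) / 2`, so none of them can be strict. -/

theorem sum_comp_perm_eq_sum_midpoint_of_sum_eq {ι : Type*} [Fintype ι] (a b c : ι → ℝ)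
    (hsum : (∑ i, a i) + (∑ i, b i) = 2 * ∑ i, c i) (σ τ : Equiv.Perm ι) :
    ∑ i, c (σ i) = ∑ i, (a i + b (τ i)) / 2 := by
  rw [Equiv.sum_comp σ c, ← Finset.sum_div, Finset.sum_add_distrib, Equiv.sum_comp τ b]
  linarith

theorem angle_partition_all_straight (n : ℕ) (a b c : Fin n → ℝ)
    (hsum : (∑ i, a i) + (∑ i, b i) = 2 * ∑ i, c i)
    (σ τ : Equiv.Perm (Fin n))
    -- the i-th angle has points (a i, 0), (c (σ i), 1), (b (τ i), 2) and is
    -- straight or left-facing, i.e. x(q) ≤ (x(p) + x(r)) / 2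
    (hangles : ∀ i, c (σ i) ≤ (a i + b (τ i)) / 2) :
    ∀ i, c (σ i) = (a i + b (τ i)) / 2 := fun i =>
  (Finset.sum_eq_sum_iff_of_le fun i _ => hangles i).mp
    (sum_comp_perm_eq_sum_midpoint_of_sum_eq a b c hsum σ τ) i (Finset.mem_univ i)
end

section
/- An instance of Distinct Numerical Matching with Target Sums (DNMTS) with sets A, B, C of n distinct positive integers satisfying ΣA + ΣB = ΣC has a solution if and only if the corresponding Angle Partition instance (points (a,0) for a ∈ A, (b,2) for b ∈ B, (c/2,1) for c ∈ C) can be partitioned into n y-monotone angles none of which is right-facing. -/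
theorem sum_add_comp_perm_eq_sum_comp_perm {n : ℕ} {a b c : Fin n → ℤ}
    (hsum : (∑ i, a i) + (∑ i, b i) = ∑ i, c i) (σ τ : Equiv.Perm (Fin n)) :
    ∑ i, (a i + b (σ i)) = ∑ i, c (τ i) := by
  rw [Finset.sum_add_distrib, Equiv.sum_comp σ b, Equiv.sum_comp τ c, hsum]

theorem dnmts_iff_anglePartition_general (n : ℕ) (a b c : Fin n → ℤ)
    (hsum : (∑ i, a i) + (∑ i, b i) = ∑ i, c i) :
    -- DNMTS has a solution: `n` disjoint triples `(a i, b (σ i), c (τ i))` with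
    -- `a i + b (σ i) = c (τ i)`
    (∃ σ τ : Equiv.Perm (Fin n), ∀ i, a i + b (σ i) = c (τ i)) ↔
    -- the point set { (a i, 0) } ∪ { (b i, 2) } ∪ { (c i / 2, 1) } can be partitioned
    -- into `n` y-monotone angles (one point of each line per angle), none right-facing:
    -- the middle point q = (c (τ i) / 2, 1) satisfies x(q) ≤ (x(p) + x(r)) / 2
    (∃ σ τ : Equiv.Perm (Fin n), ∀ i,
      ((c (τ i) : ℝ)) / 2 ≤ ((a i : ℝ) + (b (σ i) : ℝ)) / 2) := by
  have not_right_facing_iff (σ τ : Equiv.Perm (Fin n)) (i : Fin n) :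
      ((c (τ i) : ℝ)) / 2 ≤ ((a i : ℝ) + (b (σ i) : ℝ)) / 2 ↔ c (τ i) ≤ a i + b (σ i) := by
    rw [div_le_div_iff_of_pos_right two_pos]
    exact_mod_cast Iff.rfl
  simp only [not_right_facing_iff]
  refine ⟨fun ⟨σ, τ, h⟩ => ⟨σ, τ, fun i => (h i).ge⟩, fun ⟨σ, τ, h⟩ => ⟨σ, τ, ?_⟩⟩
  -- no angle is right-facing and the total slack is zero, so every angle is straight
  have hslack := (sum_add_comp_perm_eq_sum_comp_perm hsum σ τ).symm
  exact fun i => ((Finset.sum_eq_sum_iff_of_le fun i _ => h i).mp hslack i (Finset.mem_univ i)).symm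

theorem dnmts_iff_anglePartition (n : ℕ) (a b c : Fin n → ℤ)
    (ha : Function.Injective a) (hb : Function.Injective b) (hc : Function.Injective c)
    (hapos : ∀ i, 0 < a i) (hbpos : ∀ i, 0 < b i) (hcpos : ∀ i, 0 < c i)
    (hsum : (∑ i, a i) + (∑ i, b i) = ∑ i, c i) :
    -- DNMTS has a solution: `n` disjoint triples `(a i, b (σ i), c (τ i))` with
    -- `a i + b (σ i) = c (τ i)`
    (∃ σ τ : Equiv.Perm (Fin n), ∀ i, a i + b (σ i) = c (τ i)) ↔
    -- the point set { (a i, 0) } ∪ { (b i, 2) } ∪ { (c i / 2, 1) } can be partitioned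
    -- into `n` y-monotone angles (one point of each line per angle), none right-facing:
    -- the middle point q = (c (τ i) / 2, 1) satisfies x(q) ≤ (x(p) + x(r)) / 2
    (∃ σ τ : Equiv.Perm (Fin n), ∀ i,
      ((c (τ i) : ℝ)) / 2 ≤ ((a i : ℝ) + (b (σ i) : ℝ)) / 2) :=
  dnmts_iff_anglePartition_general n a b c hsum
end

section
/- Any three distinct points on the parabola y = Δ² + 3 − (x − iΔ)² with x-coordinates in the interval [iΔ, (i+1)Δ], listed in order of decreasing y-coordinate, form a right-facing y-monotone angle. -/
/-! The parabola is strictly concave, so for `x₁ < x₂ < x₃` the middle point lies strictly above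
the chord through the outer two, which is exactly the sign condition on the cross product; and it
is strictly decreasing to the right of its vertex `iΔ`, which gives the y-monotonicity. -/

/-- The cross product determinant `det(u, v)` of two planar vectors. -/
def cross (u v : ℝ × ℝ) : ℝ := u.1 * v.2 - u.2 * v.1

open Set

theorem cross_graph_neg_of_strictConcaveOn {s : Set ℝ} {f : ℝ → ℝ} (hf : StrictConcaveOn ℝ s f)
    {x₁ x₂ x₃ : ℝ} (hx₁ : x₁ ∈ s) (hx₃ : x₃ ∈ s) (h12 : x₁ < x₂) (h23 : x₂ < x₃) :
    cross ((x₁, f x₁) - (x₃, f x₃)) ((x₂, f x₂) - (x₃, f x₃)) < 0 := by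
  have hslope := hf.slope_anti_adjacent hx₁ hx₃ h12 h23
  rw [div_lt_div_iff₀ (sub_pos.mpr h23) (sub_pos.mpr h12)] at hslope
  simp only [cross, Prod.fst_sub, Prod.snd_sub]
  linarith

theorem strictConcaveOn_const_sub_sq (a c : ℝ) :
    StrictConcaveOn ℝ univ fun x : ℝ => c - (x - a) ^ 2 := by
  have hsq : StrictConvexOn ℝ univ fun x : ℝ => (x - a) ^ 2 := by
    simpa [Function.comp_def, sub_eq_add_neg, add_comm] using
      (Even.strictConvexOn_pow even_two two_ne_zero).translate_left (-a)
  exact (concaveOn_const c convex_univ).sub_strictConvexOn hsq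

theorem strictAntiOn_const_sub_sq (a c : ℝ) :
    StrictAntiOn (fun x : ℝ => c - (x - a) ^ 2) (Ici a) := by
  intro x hx y hy hxy
  have := pow_lt_pow_left₀ (sub_lt_sub_right hxy a) (sub_nonneg.mpr hx) two_ne_zero
  simp only
  linarith

theorem parabola_triples_right_facing_general (Δ i : ℝ)
    (x₁ x₂ x₃ : ℝ) (h1 : i * Δ ≤ x₁) (h12 : x₁ < x₂) (h23 : x₂ < x₃)
    (f : ℝ → ℝ) (hf : ∀ x, f x = Δ ^ 2 + 3 - (x - i * Δ) ^ 2)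
    (p q r : ℝ × ℝ) (hp : p = (x₁, f x₁)) (hq : q = (x₂, f x₂)) (hr : r = (x₃, f x₃)) :
    -- (p, q, r) is y-monotone (y strictly decreasing) and right-facing
    p.2 > q.2 ∧ q.2 > r.2 ∧ cross (p - r) (q - r) < 0 := by
  obtain rfl : f = fun x => Δ ^ 2 + 3 - (x - i * Δ) ^ 2 := funext hf
  subst hp hq hr
  have hanti := strictAntiOn_const_sub_sq (i * Δ) (Δ ^ 2 + 3)
  have hx₂ : x₂ ∈ Ici (i * Δ) := mem_Ici.mpr (h1.trans h12.le)
  exact ⟨hanti h1 hx₂ h12, hanti hx₂ (mem_Ici.mpr (hx₂.out.trans h23.le)) h23,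
    cross_graph_neg_of_strictConcaveOn (strictConcaveOn_const_sub_sq _ _) trivial trivial h12 h23⟩

theorem parabola_triples_right_facing (Δ i : ℝ) (hΔ : 0 < Δ) (hi : 1 ≤ i)
    (x₁ x₂ x₃ : ℝ) (h1 : i * Δ ≤ x₁) (h12 : x₁ < x₂) (h23 : x₂ < x₃)
    (h3 : x₃ ≤ (i + 1) * Δ)
    (f : ℝ → ℝ) (hf : ∀ x, f x = Δ ^ 2 + 3 - (x - i * Δ) ^ 2)
    (p q r : ℝ × ℝ) (hp : p = (x₁, f x₁)) (hq : q = (x₂, f x₂)) (hr : r = (x₃, f x₃)) :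
    -- (p, q, r) is y-monotone (y strictly decreasing) and right-facing
    p.2 > q.2 ∧ q.2 > r.2 ∧ cross (p - r) (q - r) < 0 :=
  parabola_triples_right_facing_general Δ i x₁ x₂ x₃ h1 h12 h23 f hf p q r hp hq hr
end
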